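/- (Dani correspondence) Let r = (r₁,…,r_n) with r₁+⋯+r_n = 1 and r_i ≥ 0, and for x ∈ ℝⁿ let u(x) = [[1,x],[0,I_n]] and a(t) = diag(e^t, e^{-r₁t},…,e^{-r_nt}). Then x ∈ Bad(r) — i.e., there exists c > 0 such that max_i q^{r_i}|qx_i − p_i| ≥ c for all q ∈ ℕ and p ∈ ℤⁿ — if and only if there exists ε > 0 such that for all t > 0 the lattice a(t)u(x)ℤ^{n+1} contains no non-zero vector of Euclidean norm less than ε. -/

import Mathlib

/-!
Pass to the dual lattices. With B(t) = (a(t)u(x))⁻ᵀ, the vector B(t)(q, p) has coordinates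
e^{-t} q and e^{r_i t}(p_i - q x_i); taking e^t comparable to q shows that x ∈ Bad(r) iff the
dual lattices B(t)ℤ^{n+1}, t > 0, all lie in one K_δ. Mahler's transference, proved with
Minkowski's convex body theorem applied to the slab {y : |⟨Bw, y⟩| ≤ 1/2} cut down by a box,
says that a unimodular lattice lies in some K_δ iff its dual does, with δ depending only on
the dimension and on ε. Hence the dual orbit is bounded iff the orbit itself is.
-/

/-- The unipotent matrix u(x) = [[1, x],[0, Iₙ]] ∈ SL(n+1,ℝ): ones on the diagonal
and the entries of the row vector x in positions (1,2),…,(1,n+1). -/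
noncomputable def uMat (n : ℕ) (x : Fin n → ℝ) : Matrix (Fin (n + 1)) (Fin (n + 1)) ℝ :=
  fun i j =>
    if i = 0 then (if h : j = 0 then 1 else x (j.pred h))
    else if i = j then 1 else 0

/-- The diagonal matrix a(t) = diag(e^t, e^{-r₁t}, …, e^{-rₙt}). -/
noncomputable def aMat (n : ℕ) (t : ℝ) (r : Fin n → ℝ) :
    Matrix (Fin (n + 1)) (Fin (n + 1)) ℝ :=
  fun i j =>
    if i = j then (if h : i = 0 then Real.exp t else Real.exp (-(r (i.pred h) * t)))
    else 0

/-- The Euclidean norm on ℝ^m. -/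
noncomputable def eNorm {m : ℕ} (a : Fin m → ℝ) : ℝ :=
  Real.sqrt (∑ k, a k ^ 2)

open Matrix

lemma abs_le_eNorm {m : ℕ} (a : Fin m → ℝ) (i : Fin m) : |a i| ≤ eNorm a := by
  rw [eNorm, ← Real.sqrt_sq_eq_abs]
  exact Real.sqrt_le_sqrt (Finset.single_le_sum (f := fun k => a k ^ 2)
    (fun k _ => sq_nonneg _) (Finset.mem_univ i))

lemma eNorm_le_sqrt_mul {m : ℕ} {a : Fin m → ℝ} {c : ℝ} (hc : 0 ≤ c)
    (h : ∀ i, |a i| ≤ c) :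
    eNorm a ≤ √m * c := by
  calc eNorm a ≤ √(m * c ^ 2) := by
        refine Real.sqrt_le_sqrt ?_
        simpa using Finset.sum_le_sum (s := Finset.univ)
          fun i _ => sq_le_sq' (abs_le.1 (h i)).1 (abs_le.1 (h i)).2
    _ = √m * c := by rw [Real.sqrt_mul (Nat.cast_nonneg m), Real.sqrt_sq hc]

lemma exists_eNorm_le_sqrt_mul_abs {m : ℕ} [NeZero m] (a : Fin m → ℝ) :
    ∃ i, eNorm a ≤ √m * |a i| := by
  obtain ⟨i, -, hi⟩ := Finset.exists_max_image Finset.univ (fun k => |a k|) Finset.univ_nonempty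
  exact ⟨i, eNorm_le_sqrt_mul (abs_nonneg _) fun k => hi k (Finset.mem_univ k)⟩

/-- `InK ε M`: the lattice `M ℤ^m` lies in `K_ε`. -/
def InK {m : ℕ} (ε : ℝ) (M : Matrix (Fin m) (Fin m) ℝ) : Prop :=
  ∀ v : Fin m → ℤ, v ≠ 0 → ε ≤ eNorm (M *ᵥ fun k => (v k : ℝ))

lemma mulVec_dotProduct_mulVec_of_transpose_mul_eq_one {ι R : Type*} [Fintype ι] [DecidableEq ι]
    [CommRing R] {A B : Matrix ι ι R} (hAB : Aᵀ * B = 1) (k w : ι → R) :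
    A *ᵥ k ⬝ᵥ B *ᵥ w = k ⬝ᵥ w := by
  rw [dotProduct_mulVec, ← vecMul_transpose, vecMul_vecMul, hAB, vecMul_one]

lemma transpose_mul_eq_one_comm {m : ℕ} {R : Type*} [CommRing R]
    {A B : Matrix (Fin m) (Fin m) R} :
    Aᵀ * B = 1 ↔ Bᵀ * A = 1 := by
  rw [mul_eq_one_comm, ← transpose_eq_one, transpose_mul, transpose_transpose, mul_eq_one_comm]

section Matrices

variable {n : ℕ} (t : ℝ) (r x : Fin n → ℝ)

lemma aMat_eq_diagonal : aMat n t r =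
    diagonal (Fin.cons (Real.exp t) fun i => Real.exp (-(r i * t))) := by
  ext i j
  cases i using Fin.cases <;> simp [aMat, diagonal, Fin.succ_ne_zero]

lemma aMat_mul_aMat_neg : aMat n t r * aMat n (-t) r = 1 := by
  rw [aMat_eq_diagonal, aMat_eq_diagonal, diagonal_mul_diagonal, ← diagonal_one]
  congr 1
  ext i
  cases i using Fin.cases <;> simp [← Real.exp_add]

lemma det_aMat (hr : ∑ i, r i = 1) : (aMat n t r).det = 1 := by
  rw [aMat_eq_diagonal, det_diagonal, Fin.prod_univ_succ]
  simp only [Fin.cons_zero, Fin.cons_succ, ← Real.exp_sum, ← Real.exp_add]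
  simp [← Finset.sum_mul, hr]

lemma uMat_mulVec_zero (v : Fin (n + 1) → ℝ) :
    (uMat n x *ᵥ v) 0 = v 0 + ∑ i, x i * v i.succ := by
  simp [mulVec, dotProduct, uMat, Fin.sum_univ_succ, Fin.succ_ne_zero]

lemma uMat_mulVec_succ (v : Fin (n + 1) → ℝ) (i : Fin n) :
    (uMat n x *ᵥ v) i.succ = v i.succ := by
  simp [mulVec, dotProduct, uMat, Fin.succ_ne_zero, ite_mul]

lemma uMat_neg_mul_uMat : uMat n (-x) * uMat n x = 1 := by
  refine ext_iff_mulVec.2 fun v => funext fun i => ?_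
  rw [← mulVec_mulVec, one_mulVec]
  cases i using Fin.cases with
  | zero => simp only [uMat_mulVec_zero, uMat_mulVec_succ, Pi.neg_apply, neg_mul,
      Finset.sum_neg_distrib, add_neg_cancel_right]
  | succ i => simp only [uMat_mulVec_succ]

lemma det_uMat : (uMat n x).det = 1 := by
  rw [det_of_isUpperTriangular]
  · refine Finset.prod_eq_one fun i _ => ?_
    cases i using Fin.cases <;> simp [uMat, Fin.succ_ne_zero]
  · intro i j (hij : j < i)
    simp [uMat, ((Fin.zero_le j).trans_lt hij).ne', hij.ne']

end Matrices

section Dual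

variable {n : ℕ} (t : ℝ) (r x : Fin n → ℝ)

lemma vecMul_uMat_zero (v : Fin (n + 1) → ℝ) : (v ᵥ* uMat n x) 0 = v 0 := by
  simp [vecMul, dotProduct, uMat, Fin.sum_univ_succ, Fin.succ_ne_zero]

lemma vecMul_uMat_succ (v : Fin (n + 1) → ℝ) (i : Fin n) :
    (v ᵥ* uMat n x) i.succ = v 0 * x i + v i.succ := by
  simp [vecMul, dotProduct, uMat, Fin.sum_univ_succ, Fin.succ_ne_zero]

/-- The dual lattice matrix `(a(t) u(x))⁻ᵀ`, via `a(t)⁻¹ = a(-t)` and `u(x)⁻¹ = u(-x)`. -/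
noncomputable def dualMat (n : ℕ) (t : ℝ) (r x : Fin n → ℝ) :
    Matrix (Fin (n + 1)) (Fin (n + 1)) ℝ :=
  aMat n (-t) r * (uMat n (-x))ᵀ

lemma transpose_mul_dualMat : (aMat n t r * uMat n x)ᵀ * dualMat n t r x = 1 := by
  have haT : (aMat n t r)ᵀ = aMat n t r := by rw [aMat_eq_diagonal, diagonal_transpose]
  rw [dualMat, transpose_mul, haT, Matrix.mul_assoc, ← Matrix.mul_assoc (aMat n t r),
    aMat_mul_aMat_neg, Matrix.one_mul, ← transpose_mul, uMat_neg_mul_uMat, transpose_one]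

lemma det_aMat_mul_uMat (hr : ∑ i, r i = 1) : (aMat n t r * uMat n x).det = 1 := by
  rw [det_mul, det_aMat t r hr, det_uMat, one_mul]

lemma det_dualMat (hr : ∑ i, r i = 1) : (dualMat n t r x).det = 1 := by
  have h := congrArg det (transpose_mul_dualMat t r x)
  rwa [det_mul, det_transpose, det_aMat_mul_uMat t r x hr, one_mul, det_one] at h

lemma dualMat_mulVec_zero (v : Fin (n + 1) → ℝ) :
    (dualMat n t r x *ᵥ v) 0 = Real.exp (-t) * v 0 := by
  rw [dualMat, ← mulVec_mulVec, aMat_eq_diagonal, mulVec_diagonal, mulVec_transpose,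
    vecMul_uMat_zero, Fin.cons_zero]

lemma dualMat_mulVec_succ (v : Fin (n + 1) → ℝ) (i : Fin n) :
    (dualMat n t r x *ᵥ v) i.succ = Real.exp (r i * t) * (v i.succ - x i * v 0) := by
  rw [dualMat, ← mulVec_mulVec, aMat_eq_diagonal, mulVec_diagonal, mulVec_transpose,
    vecMul_uMat_succ, Fin.cons_succ, Pi.neg_apply, mul_neg, neg_neg]
  ring

end Dual

section Minkowski

open MeasureTheory Submodule

lemma exists_ne_zero_mulVec_intCast_mem {ι : Type*} [Fintype ι] [DecidableEq ι]
    {A : Matrix ι ι ℝ} (hA : A.det ≠ 0) {S : Set (ι → ℝ)} (hsymm : ∀ y ∈ S, -y ∈ S)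
    (hconv : Convex ℝ S) (hvol : ENNReal.ofReal |A.det| * 2 ^ Fintype.card ι < volume S) :
    ∃ k : ι → ℤ, k ≠ 0 ∧ A *ᵥ (fun i => (k i : ℝ)) ∈ S := by
  let b := (Pi.basisFun ℝ ι).map (A.toLinearEquiv' (A.invertibleOfIsUnitDet hA.isUnit))
  have hb : ∀ i, b i = A *ᵥ Pi.single i 1 := fun i => by
    simp [b, Matrix.toLinearEquiv', Pi.basisFun_apply]
  have hcovol : volume (ZSpan.fundamentalDomain b) = ENNReal.ofReal |A.det| := by
    rw [ZSpan.volume_fundamentalDomain, ← det_transpose]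
    congr 3
    ext i j
    simp [hb, mulVec_single]
  have : Countable (span ℤ (Set.range b)).toAddSubgroup :=
    inferInstanceAs (Countable (span ℤ (Set.range b)))
  obtain ⟨⟨v, hvL⟩, hv0, hvS⟩ :=
    exists_ne_zero_mem_lattice_of_measure_mul_two_pow_lt_measure
      (ZSpan.isAddFundamentalDomain' b volume) hsymm hconv
      (by rwa [hcovol, Module.finrank_fintype_fun_eq_card])
  obtain ⟨k, rfl⟩ := (mem_span_range_iff_exists_fun ℤ).1 hvL
  have hk : ∑ i, k i • b i = A *ᵥ fun i => (k i : ℝ) := by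
    ext l
    simp [hb, mulVec, dotProduct, Finset.sum_apply, mulVec_single, mul_comm]
  refine ⟨k, ?_, hk ▸ hvS⟩
  rintro rfl
  simp at hv0

end Minkowski

lemma det_updateRow_one {ι R : Type*} [Fintype ι] [DecidableEq ι] [CommRing R] (u : ι → R)
    (j : ι) : (updateRow (1 : Matrix ι ι R) j u).det = u j := by
  have hu : u = ∑ l, u l • (1 : Matrix ι ι R) l := by
    ext i
    simp [one_apply]
  conv_lhs => rw [hu]
  rw [det_updateRow_sum, det_one, smul_eq_mul, mul_one]

section Body

open MeasureTheory

variable {n : ℕ} (u : Fin (n + 1) → ℝ) (j : Fin (n + 1)) (R : ℝ)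

def minkowskiBody : Set (Fin (n + 1) → ℝ) :=
  {y | |u ⬝ᵥ y| ≤ 1 / 2 ∧ ∀ l ≠ j, |y l| ≤ R}

lemma minkowskiBody_eq_preimage :
    minkowskiBody u j R = toLin' (updateRow 1 j u) ⁻¹'
      Set.Icc (-Function.update (fun _ => R) j (1 / 2))
        (Function.update (fun _ => R) j (1 / 2)) := by
  ext y
  simp only [minkowskiBody, Set.mem_preimage, toLin'_apply, updateRow_mulVec,
    one_mulVec, Set.mem_Icc, Pi.le_def, Pi.neg_apply, ← forall_and, ← abs_le]
  refine ⟨fun ⟨hj, hl⟩ i => ?_,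
    fun h => ⟨by simpa using h j, fun l hl => by simpa [hl] using h l⟩⟩
  rcases eq_or_ne i j with rfl | hi
  · simpa using hj
  · simpa [hi] using hl i hi


lemma volume_minkowskiBody (hu : u j ≠ 0) (hR : 0 ≤ R) :
    volume (minkowskiBody u j R) = ENNReal.ofReal (|u j|⁻¹ * (2 * R) ^ n) := by
  rw [minkowskiBody_eq_preimage, Measure.addHaar_preimage_linearMap _
    (by rwa [LinearMap.det_toLin', det_updateRow_one]), LinearMap.det_toLin', det_updateRow_one,
    Real.volume_Icc_pi, Fin.prod_univ_succAbove _ j]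
  simp [Fin.succAbove_ne, ← two_mul, ENNReal.ofReal_mul (inv_nonneg.2 (abs_nonneg _)),
    ENNReal.ofReal_pow (by positivity : (0 : ℝ) ≤ 2 * R)]

lemma convex_minkowskiBody : Convex ℝ (minkowskiBody u j R) := by
  rw [minkowskiBody_eq_preimage]
  exact (convex_Icc _ _).linear_preimage _

lemma neg_mem_minkowskiBody {y : Fin (n + 1) → ℝ} (hy : y ∈ minkowskiBody u j R) :
    -y ∈ minkowskiBody u j R := by
  simpa [minkowskiBody] using hy

lemma abs_le_of_mem_minkowskiBody {u : Fin (n + 1) → ℝ} {j : Fin (n + 1)} {R : ℝ}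
    (hmax : ∀ l, |u l| ≤ |u j|) (hu : u j ≠ 0) (hR : 0 ≤ R) {y : Fin (n + 1) → ℝ}
    (hy : y ∈ minkowskiBody u j R) (hy0 : u ⬝ᵥ y = 0) (l : Fin (n + 1)) :
    |y l| ≤ (n + 1) * R := by
  rcases ne_or_eq l j with hl | rfl
  · nlinarith [hy.2 l hl]
  have hsplit : u l * y l = -∑ i : Fin n, u (l.succAbove i) * y (l.succAbove i) := by
    rw [dotProduct, Fin.sum_univ_succAbove _ l] at hy0
    linarith
  have hl : |u l| * |y l| ≤ |u l| * (n * R) :=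
    calc |u l| * |y l| = |∑ i : Fin n, u (l.succAbove i) * y (l.succAbove i)| := by
          rw [← abs_mul, hsplit, abs_neg]
      _ ≤ ∑ i : Fin n, |u (l.succAbove i)| * |y (l.succAbove i)| := by
          simpa only [abs_mul] using Finset.abs_sum_le_sum_abs
            (fun i => u (l.succAbove i) * y (l.succAbove i)) Finset.univ
      _ ≤ ∑ _i : Fin n, |u l| * R := Finset.sum_le_sum fun i _ =>
          mul_le_mul (hmax _) (hy.2 _ (Fin.succAbove_ne l i)) (abs_nonneg _) (abs_nonneg _)
      _ = |u l| * (n * R) := by simp only [Finset.sum_const, Finset.card_univ,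
          Fintype.card_fin, nsmul_eq_mul]; ring
  nlinarith [le_of_mul_le_mul_left hl (abs_pos.2 hu)]

end Body

section Transference

open MeasureTheory

lemma exists_ne_zero_abs_mulVec_le {n : ℕ} {A B : Matrix (Fin (n + 1)) (Fin (n + 1)) ℝ}
    (hA : A.det = 1) (hAB : Aᵀ * B = 1) {w : Fin (n + 1) → ℤ} (hw : w ≠ 0) {R : ℝ}
    (hR : 0 ≤ R) (hsmall : 2 * eNorm (B *ᵥ fun i => (w i : ℝ)) < R ^ n) :
    ∃ k : Fin (n + 1) → ℤ, k ≠ 0 ∧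
      ∀ l, |(A *ᵥ fun i => (k i : ℝ)) l| ≤ (n + 1) * R := by
  set u := B *ᵥ fun i => (w i : ℝ)
  obtain ⟨j, -, hj⟩ := Finset.exists_max_image Finset.univ (fun i => |u i|) Finset.univ_nonempty
  have hmax : ∀ l, |u l| ≤ |u j| := fun l => hj l (Finset.mem_univ l)
  have hu : u j ≠ 0 := by
    intro huj
    have hu0 : u = 0 := funext fun l => abs_nonpos_iff.1 (by simpa [huj] using hmax l)
    have hw' : (fun i => (w i : ℝ)) = Aᵀ *ᵥ u := by rw [mulVec_mulVec, hAB, one_mulVec]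
    exact hw (funext fun i => by simpa [hu0] using congrFun hw' i)
  have hvol : ENNReal.ofReal |A.det| * 2 ^ Fintype.card (Fin (n + 1)) <
      volume (minkowskiBody u j R) := by
    have hsmall' : 2 * |u j| < R ^ n :=
      (mul_le_mul_of_nonneg_left (abs_le_eNorm u j) zero_le_two).trans_lt hsmall
    rw [Fintype.card_fin]
    rw [volume_minkowskiBody u j R hu hR, hA, abs_one, ENNReal.ofReal_one, one_mul,
      ← ENNReal.ofReal_ofNat, ← ENNReal.ofReal_pow zero_le_two,
      ENNReal.ofReal_lt_ofReal_iff_of_nonneg (by positivity), lt_inv_mul_iff₀ (abs_pos.2 hu)]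
    calc |u j| * 2 ^ (n + 1) = 2 ^ n * (2 * |u j|) := by ring
      _ < 2 ^ n * R ^ n := by gcongr
      _ = (2 * R) ^ n := (mul_pow 2 R n).symm
  obtain ⟨k, hk, hkS⟩ := exists_ne_zero_mulVec_intCast_mem (by simp [hA])
    (fun y => neg_mem_minkowskiBody u j R) (convex_minkowskiBody u j R) hvol
  have hint : u ⬝ᵥ (A *ᵥ fun i => (k i : ℝ)) = ((∑ i, w i * k i : ℤ) : ℝ) := by
    rw [dotProduct_comm, mulVec_dotProduct_mulVec_of_transpose_mul_eq_one hAB]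
    push_cast [dotProduct]
    exact Finset.sum_congr rfl fun i _ => mul_comm _ _
  have hzero : u ⬝ᵥ (A *ᵥ fun i => (k i : ℝ)) = 0 := by
    have hhalf := hkS.1
    rw [hint] at hhalf ⊢
    have : |∑ i, w i * k i| < 1 := by
      exact_mod_cast hhalf.trans_lt (by norm_num : (1 / 2 : ℝ) < 1)
    simp [Int.abs_lt_one_iff.1 this]
  exact ⟨k, hk, abs_le_of_mem_minkowskiBody hmax hu hR hkS hzero⟩

lemma exists_pos_inK_of_transpose_mul_eq_one (n : ℕ) {ε : ℝ} (hε : 0 < ε) :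
    ∃ δ > 0, ∀ A B : Matrix (Fin (n + 1)) (Fin (n + 1)) ℝ,
      A.det = 1 → Aᵀ * B = 1 → InK ε A → InK δ B := by
  have hs : 0 < √((n + 1 : ℕ) : ℝ) := by positivity
  set R := ε / (2 * (n + 1) * √((n + 1 : ℕ) : ℝ)) with hR_def
  have hR : 0 < R := by positivity
  refine ⟨R ^ n / 2, by positivity, fun A B hA hAB hAε w hw => ?_⟩
  by_contra! hsmall
  obtain ⟨k, hk, hkR⟩ := exists_ne_zero_abs_mulVec_le hA hAB hw hR.le (by linarith)
  have hk' : eNorm (A *ᵥ fun i => (k i : ℝ)) ≤ ε / 2 :=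
    (eNorm_le_sqrt_mul (by positivity) hkR).trans_eq (by rw [hR_def]; field_simp)
  linarith [hAε k hk]

end Transference

section Dani

variable {n : ℕ} {r x : Fin n → ℝ}

lemma exists_le_abs_rpow_mul_of_bad {c : ℝ}
    (hbad : ∀ q : ℕ, 0 < q → ∀ p : Fin n → ℤ,
      ∃ i, c ≤ (q : ℝ) ^ (r i) * |(q : ℝ) * x i - (p i : ℝ)|)
    {q : ℤ} (hq : q ≠ 0) (p : Fin n → ℤ) :
    ∃ i, c ≤ |(q : ℝ)| ^ (r i) * |(q : ℝ) * x i - (p i : ℝ)| := by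
  obtain ⟨N, rfl | rfl⟩ : ∃ N : ℕ, q = N ∨ q = -N := ⟨q.natAbs, Int.natAbs_eq q⟩
  · obtain ⟨i, hi⟩ := hbad N (by omega) p
    exact ⟨i, by simpa using hi⟩
  · obtain ⟨i, hi⟩ := hbad N (by omega) (-p)
    refine ⟨i, hi.trans_eq ?_⟩
    rw [← abs_neg (((-N : ℤ) : ℝ) * x i - p i)]
    simp [sub_eq_add_neg, add_comm]

lemma inK_dualMat_of_bad (hr0 : ∀ i, 0 ≤ r i) {c : ℝ}
    (hbad : ∀ q : ℕ, 0 < q → ∀ p : Fin n → ℤ,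
      ∃ i, c ≤ (q : ℝ) ^ (r i) * |(q : ℝ) * x i - (p i : ℝ)|)
    {t : ℝ} (ht : 0 < t) : InK (min c 1) (dualMat n t r x) := by
  intro v hv
  suffices ∃ l, min c 1 ≤ |(dualMat n t r x *ᵥ fun k => (v k : ℝ)) l| by
    obtain ⟨l, hl⟩ := this
    exact hl.trans (abs_le_eNorm _ l)
  by_cases h0 : v 0 = 0
  · obtain ⟨l, hl⟩ := Function.ne_iff.1 hv
    cases l using Fin.cases with
    | zero => exact absurd h0 hl
    | succ i =>
      refine ⟨i.succ, ?_⟩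
      rw [dualMat_mulVec_succ, h0, Int.cast_zero, mul_zero, sub_zero, abs_mul, Real.abs_exp]
      have h1 : (1 : ℝ) ≤ |(v i.succ : ℝ)| := by exact_mod_cast Int.one_le_abs hl
      nlinarith [Real.one_le_exp (mul_nonneg (hr0 i) ht.le), min_le_right c 1]
  by_cases hbig : min c 1 ≤ Real.exp (-t) * |(v 0 : ℝ)|
  · exact ⟨0, by rwa [dualMat_mulVec_zero, abs_mul, Real.abs_exp]⟩
  obtain ⟨i, hi⟩ := exists_le_abs_rpow_mul_of_bad hbad h0 fun i => v i.succ
  refine ⟨i.succ, ?_⟩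
  have hv0 : |(v 0 : ℝ)| ≤ Real.exp t := by
    have := (not_le.1 hbig).trans_le (min_le_right c 1)
    rw [Real.exp_neg, inv_mul_lt_iff₀ (Real.exp_pos t), mul_one] at this
    exact this.le
  calc min c 1 ≤ |(v 0 : ℝ)| ^ (r i) * |(v 0 : ℝ) * x i - (v i.succ : ℝ)| :=
        (min_le_left c 1).trans hi
    _ ≤ Real.exp (r i * t) * |(v 0 : ℝ) * x i - (v i.succ : ℝ)| := by
        gcongr
        rw [mul_comm, Real.exp_mul]
        exact Real.rpow_le_rpow (abs_nonneg _) hv0 (hr0 i)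
    _ = |(dualMat n t r x *ᵥ fun k => (v k : ℝ)) i.succ| := by
        rw [dualMat_mulVec_succ, abs_mul, Real.abs_exp, abs_sub_comm, mul_comm (x i)]

lemma bad_of_inK_dualMat (hr1 : ∑ i, r i = 1) (hr0 : ∀ i, 0 ≤ r i) {ε : ℝ} (hε : 0 < ε)
    (hdual : ∀ t : ℝ, 0 < t → InK ε (dualMat n t r x)) :
    ∃ c : ℝ, 0 < c ∧ ∀ q : ℕ, 0 < q → ∀ p : Fin n → ℤ,
      ∃ i, c ≤ (q : ℝ) ^ (r i) * |(q : ℝ) * x i - (p i : ℝ)| := by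
  set s := √((n + 1 : ℕ) : ℝ) with hs_def
  have hs : 0 < s := by positivity
  set K := 1 + s / ε
  have hK : 1 < K := lt_add_of_pos_right 1 (by positivity)
  refine ⟨ε / (s * K), by positivity, fun q hq p => ?_⟩
  have hq1 : (1 : ℝ) ≤ q := by exact_mod_cast hq
  have hKq : 1 < K * q := by nlinarith
  set t := Real.log (K * q)
  have ht : 0 < t := Real.log_pos hKq
  set v : Fin (n + 1) → ℤ := Fin.cons (q : ℤ) p
  have hv : v ≠ 0 := fun h => by simpa [v, hq.ne'] using congrFun h 0
  obtain ⟨l, hl⟩ := exists_eNorm_le_sqrt_mul_abs (dualMat n t r x *ᵥ fun k => (v k : ℝ))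
  -- at time `t = log (K q)` the first coordinate `e^{-t} q = 1/K` is too short to carry the norm
  have hεl := (hdual t ht v hv).trans hl
  rw [← hs_def] at hεl
  cases l using Fin.cases with
  | zero =>
    have hcoord : (K * q)⁻¹ * (v 0 : ℝ) = K⁻¹ := by
      simp only [v, Fin.cons_zero, Int.cast_natCast]
      field_simp
    rw [dualMat_mulVec_zero, Real.exp_neg, Real.exp_log (by positivity), hcoord,
      abs_of_pos (by positivity), ← div_eq_mul_inv, le_div_iff₀ (by positivity)] at hεl
    have hεK : ε * K = ε + s := by simp only [K]; field_simp
    linarith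
  | succ i =>
    refine ⟨i, ?_⟩
    rw [dualMat_mulVec_succ, abs_mul, Real.abs_exp, mul_comm (r i), Real.exp_mul,
      Real.exp_log (by positivity), Real.mul_rpow (by positivity) (by positivity)] at hεl
    have hKr : K ^ r i ≤ K := by
      have hri : r i ≤ 1 := hr1 ▸ Finset.single_le_sum (fun j _ => hr0 j) (Finset.mem_univ i)
      simpa using Real.rpow_le_rpow_of_exponent_le hK.le hri
    have hcoord : |(v i.succ : ℝ) - x i * v 0| = |q * x i - p i| := by
      simp only [v, Fin.cons_zero, Fin.cons_succ, Int.cast_natCast]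
      rw [abs_sub_comm, mul_comm]
    rw [hcoord] at hεl
    rw [div_le_iff₀ (by positivity)]
    calc ε ≤ s * (K ^ r i * ((q : ℝ) ^ r i * |q * x i - p i|)) := by
          rwa [← mul_assoc (K ^ r i)]
      _ ≤ s * (K * ((q : ℝ) ^ r i * |q * x i - p i|)) := by gcongr
      _ = (q : ℝ) ^ r i * |q * x i - p i| * (s * K) := by ring

end Dani

theorem stmt19_general (n : ℕ) (r : Fin n → ℝ)
    (hr1 : ∑ i, r i = 1) (hr0 : ∀ i, 0 ≤ r i) (x : Fin n → ℝ) :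
    (∃ c : ℝ, 0 < c ∧ ∀ q : ℕ, 0 < q → ∀ p : Fin n → ℤ,
        ∃ i, c ≤ (q : ℝ) ^ (r i) * |(q : ℝ) * x i - (p i : ℝ)|) ↔
    (∃ ε : ℝ, 0 < ε ∧ ∀ t : ℝ, 0 < t → ∀ v : Fin (n + 1) → ℤ, v ≠ 0 →
        ε ≤ eNorm ((aMat n t r * uMat n x).mulVec fun k => (v k : ℝ))) := by
  constructor
  · rintro ⟨c, hc, hbad⟩
    obtain ⟨δ, hδ, htransfer⟩ := exists_pos_inK_of_transpose_mul_eq_one n (lt_min hc one_pos)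
    exact ⟨δ, hδ, fun t ht => htransfer _ _ (det_dualMat t r x hr1)
      (transpose_mul_eq_one_comm.1 (transpose_mul_dualMat t r x))
      (inK_dualMat_of_bad hr0 hbad ht)⟩
  · rintro ⟨ε, hε, horbit⟩
    obtain ⟨δ, hδ, htransfer⟩ := exists_pos_inK_of_transpose_mul_eq_one n hε
    exact bad_of_inK_dualMat hr1 hr0 hδ fun t ht => htransfer _ _ (det_aMat_mul_uMat t r x hr1)
      (transpose_mul_dualMat t r x) (horbit t ht)

/-- Dani correspondence: x ∈ Bad(r) iff the orbit {a(t)u(x)ℤ^{n+1} : t > 0} stays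
in some K_ε, i.e. iff there is ε > 0 such that for all t > 0 every non-zero vector
of the lattice a(t)u(x)ℤ^{n+1} has Euclidean norm at least ε. -/
theorem stmt19 (n : ℕ) (hn : 1 ≤ n) (r : Fin n → ℝ)
    (hr1 : ∑ i, r i = 1) (hr0 : ∀ i, 0 ≤ r i) (x : Fin n → ℝ) :
    (∃ c : ℝ, 0 < c ∧ ∀ q : ℕ, 0 < q → ∀ p : Fin n → ℤ,
        ∃ i, c ≤ (q : ℝ) ^ (r i) * |(q : ℝ) * x i - (p i : ℝ)|) ↔
    (∃ ε : ℝ, 0 < ε ∧ ∀ t : ℝ, 0 < t → ∀ v : Fin (n + 1) → ℤ, v ≠ 0 →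
        ε ≤ eNorm ((aMat n t r * uMat n x).mulVec fun k => (v k : ℝ))) :=
  stmt19_general n r hr1 hr0 x
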